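/- With F(x,α) = −2x·ψ(α) + 2x³, H(α) = 6α·(1/ψ'(α) + 2ψ(α)), G(x,α) = 12x²α − F² − H(α), and ψ solving the ODE of Lemma 1, the identity ∂G/∂x + F·∂G/∂α = 2G·∂F/∂α holds wherever these functions are defined. -/

import Mathlib

/-!
Write `p = ψ(α)`, `q = ψ'(α)`. Expanding both sides with `F = 2x(x² − p)`, `∂F/∂x = 6x² − 2p`,
`∂F/∂α = −2xq`, the identity reduces to `24xα + 48xαpq = 4xq·H(α)` once `H'(α) = 24αq + 4p` is
known, and that is just the definition of `H`. The formula for `H'` is the ODE for `ψ`: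
differentiating `H = 6α/q + 12αp` gives `H' − 24αq − 4p = −2(3αψ'' + 6αq³ − 4pq² − 3q)/q²`.
-/

/-- `ψ` is an analytic solution near `0` of the singular Cauchy problem
`3x ψ'' + 6x (ψ')³ − 4ψ (ψ')² − 3ψ' = 0`, `ψ(0) = 1`, `ψ'(0) = −3/4`. -/
def GavrilovODE (ψ : ℝ → ℝ) : Prop :=
  AnalyticAt ℝ ψ 0 ∧ ψ 0 = 1 ∧ deriv ψ 0 = -(3/4) ∧
    ∀ᶠ x in nhds (0:ℝ),
      3 * x * deriv (deriv ψ) x + 6 * x * (deriv ψ x)^3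
        - 4 * ψ x * (deriv ψ x)^2 - 3 * deriv ψ x = 0

open Topology

theorem hasDerivAt_gavrilovH {ψ : ℝ → ℝ} {α : ℝ}
    (hψ : DifferentiableAt ℝ ψ α) (hψ' : DifferentiableAt ℝ (deriv ψ) α) (hq : deriv ψ α ≠ 0)
    (hode : 3 * α * deriv (deriv ψ) α + 6 * α * (deriv ψ α)^3
        - 4 * ψ α * (deriv ψ α)^2 - 3 * deriv ψ α = 0) :
    HasDerivAt (fun a => 6*a*(1/deriv ψ a + 2*ψ a)) (24*α*deriv ψ α + 4*ψ α) α := by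
  have hderiv := ((hasDerivAt_id α).const_mul (6:ℝ)).mul
    ((hasDerivAt_const α (1:ℝ) |>.div hψ'.hasDerivAt hq).add (hψ.hasDerivAt.const_mul (2:ℝ)))
  refine hderiv.congr_deriv ?_
  simp only [id_eq, Pi.add_apply, Pi.div_apply]
  field_simp
  linear_combination (-2 : ℝ) * hode

theorem gavrilov_FG_identity_of_hasDerivAt {ψ H : ℝ → ℝ} {F G : ℝ → ℝ → ℝ} {x α q : ℝ}
    (hF : ∀ x α, F x α = -2*x*ψ α + 2*x^3)
    (hG : ∀ x α, G x α = 12*x^2*α - (F x α)^2 - H α)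
    (hψ : HasDerivAt ψ q α) (hq : q ≠ 0)
    (hH : HasDerivAt H (24*α*q + 4*ψ α) α) (hHα : H α = 6*α*(1/q + 2*ψ α)) :
    deriv (fun x' => G x' α) x + F x α * deriv (fun α' => G x α') α
      = 2 * G x α * deriv (fun α' => F x α') α := by
  have hFx : HasDerivAt (fun x' => F x' α) (-2*ψ α + 6*x^2) x := by
    simp only [hF]
    refine (((hasDerivAt_id x).const_mul (-2)).mul_const (ψ α)).add
      ((hasDerivAt_pow 3 x).const_mul 2) |>.congr_deriv ?_
    push_cast; ring
  have hFα : HasDerivAt (fun α' => F x α') (-2*x*q) α := by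
    simp only [hF]
    exact (hψ.const_mul (-2*x)).add_const _
  have hGx : HasDerivAt (fun x' => G x' α) (24*x*α - 2*F x α*(-2*ψ α + 6*x^2)) x := by
    simp only [hG]
    refine (((hasDerivAt_pow 2 x).const_mul 12).mul_const α).sub (hFx.pow 2) |>.sub_const (H α)
      |>.congr_deriv ?_
    push_cast; ring
  have hGα : HasDerivAt (fun α' => G x α') (12*x^2 - 2*F x α*(-2*x*q) - (24*α*q + 4*ψ α)) α := by
    simp only [hG]
    refine (((hasDerivAt_id α).const_mul (12*x^2)).sub (hFα.pow 2)).sub hH |>.congr_deriv ?_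
    push_cast; ring
  rw [hGx.deriv, hGα.deriv, hFα.deriv, hG, hF, hHα]
  field_simp
  ring

/-- Lemma 2, part (2a): `∂G/∂x + F ∂G/∂α = 2G ∂F/∂α`. -/
theorem gavrilov_FG_identity (ψ : ℝ → ℝ) (h : GavrilovODE ψ)
    (F : ℝ → ℝ → ℝ) (hF : ∀ x α, F x α = -2*x*ψ α + 2*x^3)
    (H : ℝ → ℝ) (hH : ∀ α, H α = 6*α*(1/deriv ψ α + 2*ψ α))
    (G : ℝ → ℝ → ℝ) (hG : ∀ x α, G x α = 12*x^2*α - (F x α)^2 - H α) :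
    ∀ x : ℝ, ∀ᶠ α in nhds (0:ℝ),
      deriv (fun x' => G x' α) x + F x α * deriv (fun α' => G x α') α
        = 2 * G x α * deriv (fun α' => F x α') α := by
  obtain ⟨hψ, -, hψ'0, hode⟩ := h
  intro x
  have hq : ∀ᶠ α in 𝓝 0, deriv ψ α ≠ 0 :=
    hψ.deriv.continuousAt.eventually_ne (by norm_num [hψ'0])
  filter_upwards [hψ.eventually_analyticAt, hq, hode] with α hψα hqα hodeα
  obtain rfl : H = fun a => 6*a*(1/deriv ψ a + 2*ψ a) := funext hH
  exact gavrilov_FG_identity_of_hasDerivAt hF hG hψα.differentiableAt.hasDerivAt hqα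
    (hasDerivAt_gavrilovH hψα.differentiableAt hψα.deriv.differentiableAt hqα hodeα) rfl
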